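/- arXiv:1604.07976 — 3 statements merged into one kernel-verified Lean document; each statement's English description precedes it below -/
import Mathlib

section
/- (Balas' union of polytopes) Let P₁, …, P_k be non-empty polytopes in R^d and let P = conv(P₁ ∪ ⋯ ∪ P_k). Then xc(P) ≤ Σ_{i=1}^{k} max{1, xc(P_i)}. -/
/-!
An extended formulation is handled through its homogenization: the cone of feasible `((x, y), t)`,
whose slice at `t = 1` projects onto the polytope. Balas' formulation of `conv (P₁ ∪ ⋯ ∪ Pₖ)` takes
one copy `((xᵢ, yᵢ), tᵢ)` of the homogenization of each `Pᵢ`, with `x = ∑ xᵢ` and `∑ tᵢ = 1`, so its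
inequalities are those of the blocks. It describes the convex hull as soon as each block forces
`tᵢ ≥ 0` and `xᵢ ∈ tᵢ • Pᵢ`. For a bounded `Pᵢ`, `tᵢ = 0` makes `xᵢ` a recession direction, so
`xᵢ = 0`, and `tᵢ < 0` would force `Pᵢ` to be a single point; so every formulation of a polytope
with two points qualifies. A point `p` needs the inequality `t ≥ 0` next to `x = t • p`, whence the
`max 1`. Balas' formulation for the vertices shows that every polytope has some extended
formulation, so `xc` is attained.
-/

/-- `P ⊆ ℝ^ι` admits an extended formulation with `m` inequalities: a linear system
`A x + B y ≤ b`, `C x + D y = c` (with `k` extra variables `y` and `p` equalities)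
whose projection to the `x`-variables is exactly `P`. -/
def IsExtFormulation {ι : Type} [Fintype ι] (P : Set (ι → ℝ)) (m : ℕ) : Prop :=
  ∃ (k p : ℕ) (A : Matrix (Fin m) ι ℝ) (B : Matrix (Fin m) (Fin k) ℝ) (b : Fin m → ℝ)
    (C : Matrix (Fin p) ι ℝ) (D : Matrix (Fin p) (Fin k) ℝ) (c : Fin p → ℝ),
    P = {x : ι → ℝ | ∃ y : Fin k → ℝ,
      (∀ i, A.mulVec x i + B.mulVec y i ≤ b i) ∧
      (∀ j, C.mulVec x j + D.mulVec y j = c j)}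

/-- The extension complexity of `P`: the minimum number of inequalities
in an extended formulation of `P`. -/
noncomputable def xc {ι : Type} [Fintype ι] (P : Set (ι → ℝ)) : ℕ :=
  sInf {m | IsExtFormulation P m}

open Bornology

theorem eq_zero_of_forall_add_smul_mem {E : Type*} [NormedAddCommGroup E] [NormedSpace ℝ E]
    {S : Set E} (hS : IsBounded S) {p x : E} (h : ∀ s : ℝ, 0 ≤ s → p + s • x ∈ S) : x = 0 := by
  obtain ⟨R, hR⟩ := isBounded_iff_forall_norm_le.1 hS
  by_contra hx
  have hxpos := norm_pos_iff.2 hx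
  have hs : 0 ≤ (R + ‖p‖ + 1) / ‖x‖ := by
    have := (norm_nonneg _).trans (hR _ (h 0 le_rfl))
    positivity
  have : R + ‖p‖ + 1 ≤ R + ‖p‖ := calc
    R + ‖p‖ + 1 = ‖((R + ‖p‖ + 1) / ‖x‖) • x‖ := by
      rw [norm_smul, Real.norm_of_nonneg hs, div_mul_cancel₀ _ hxpos.ne']
    _ = ‖(p + ((R + ‖p‖ + 1) / ‖x‖) • x) - p‖ := by rw [add_sub_cancel_left]
    _ ≤ R + ‖p‖ := (norm_sub_le _ _).trans (by gcongr; exact hR _ (h _ hs))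
  linarith

theorem LinearMap.apply_prod_prod_eq_add {V W U : Type*} [AddCommGroup V] [Module ℝ V]
    [AddCommGroup W] [Module ℝ W] [AddCommGroup U] [Module ℝ U]
    (φ : (V × W) × ℝ →ₗ[ℝ] U) (x : V) (y : W) (t : ℝ) :
    φ ((x, y), t) = φ ((x, 0), 0) + φ ((0, y), 0) + t • φ ((0, 0), 1) := by
  rw [← map_smul, ← map_add, ← map_add]
  simp

/-- Constraints live on the homogenized space: at `t = 1`, `ineq r ((x, y), t) ≤ 0` and
`eqn ((x, y), t) = 0` are a system `A x + B y ≤ b`, `C x + D y = c`. -/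
structure ExtFormulation (E : Type) [AddCommGroup E] [Module ℝ E] where
  Ineq : Type
  [fintypeIneq : Fintype Ineq]
  Aux : Type
  [addCommGroupAux : AddCommGroup Aux]
  [moduleAux : Module ℝ Aux]
  [finiteDimensionalAux : FiniteDimensional ℝ Aux]
  Eqn : Type
  [addCommGroupEqn : AddCommGroup Eqn]
  [moduleEqn : Module ℝ Eqn]
  [finiteDimensionalEqn : FiniteDimensional ℝ Eqn]
  ineq : Ineq → (E × Aux) × ℝ →ₗ[ℝ] ℝ
  eqn : (E × Aux) × ℝ →ₗ[ℝ] Eqn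

attribute [instance] ExtFormulation.fintypeIneq ExtFormulation.addCommGroupAux
  ExtFormulation.moduleAux ExtFormulation.finiteDimensionalAux ExtFormulation.addCommGroupEqn
  ExtFormulation.moduleEqn ExtFormulation.finiteDimensionalEqn

namespace ExtFormulation

section Module

variable {E : Type} [AddCommGroup E] [Module ℝ E]

def Feasible (L : ExtFormulation E) (v : (E × L.Aux) × ℝ) : Prop :=
  (∀ r, L.ineq r v ≤ 0) ∧ L.eqn v = 0

def proj (L : ExtFormulation E) : Set E :=
  {x | ∃ y, L.Feasible ((x, y), 1)}

def HomogenizationExact (L : ExtFormulation E) : Prop :=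
  ∀ x y t, L.Feasible ((x, y), t) → 0 ≤ t ∧ ∃ p ∈ L.proj, x = t • p

variable {L : ExtFormulation E}

theorem feasible_zero : L.Feasible 0 := by
  simp [Feasible]

theorem Feasible.add {v w : (E × L.Aux) × ℝ} (hv : L.Feasible v) (hw : L.Feasible w) :
    L.Feasible (v + w) :=
  ⟨fun r => by simpa only [map_add] using add_nonpos (hv.1 r) (hw.1 r), by
    rw [map_add, hv.2, hw.2, add_zero]⟩

theorem Feasible.smul {v : (E × L.Aux) × ℝ} (hv : L.Feasible v) {c : ℝ} (hc : 0 ≤ c) :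
    L.Feasible (c • v) :=
  ⟨fun r => by simpa only [map_smul, smul_eq_mul] using mul_nonpos_of_nonneg_of_nonpos hc (hv.1 r),
    by rw [map_smul, hv.2, smul_zero]⟩

theorem convex_proj (L : ExtFormulation E) : Convex ℝ L.proj := by
  rintro x ⟨y, hx⟩ x' ⟨y', hx'⟩ a b ha hb hab
  refine ⟨a • y + b • y', ?_⟩
  convert (hx.smul ha).add (hx'.smul hb) using 1
  simp [hab]

theorem Feasible.add_smul_mem_proj {x p : E} {y yp : L.Aux} (h : L.Feasible ((x, y), 0))
    (hp : L.Feasible ((p, yp), 1)) {s : ℝ} (hs : 0 ≤ s) : p + s • x ∈ L.proj :=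
  ⟨yp + s • y, by simpa using hp.add (h.smul hs)⟩

end Module

section Normed

variable {E : Type} [NormedAddCommGroup E] [NormedSpace ℝ E] {L : ExtFormulation E}

theorem Feasible.eq_zero_of_isBounded {x : E} {y : L.Aux} (h : L.Feasible ((x, y), 0))
    (hb : IsBounded L.proj) (hne : L.proj.Nonempty) : x = 0 := by
  obtain ⟨p, yp, hp⟩ := hne
  exact eq_zero_of_forall_add_smul_mem hb fun s hs => h.add_smul_mem_proj hp hs

theorem homogenizationExact_of_isBounded (hb : IsBounded L.proj) (hnt : L.proj.Nontrivial) :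
    L.HomogenizationExact := by
  intro x y t h
  have ht : 0 ≤ t := by
    by_contra! ht
    -- adding `(-t) • w` for `w ∈ L.proj` cancels `t`, leaving a recession direction
    have hx : ∀ w ∈ L.proj, t • w = x := by
      rintro w ⟨yw, hw⟩
      have hrec : L.Feasible ((x + (-t) • w, y + (-t) • yw), 0) := by
        simpa using h.add (hw.smul (neg_nonneg.2 ht.le))
      simpa [neg_smul, add_neg_eq_zero, eq_comm] using hrec.eq_zero_of_isBounded hb hnt.nonempty
    obtain ⟨p, hp, q, hq, hpq⟩ := hnt
    exact hpq (smul_right_injective E ht.ne ((hx p hp).trans (hx q hq).symm))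
  refine ⟨ht, ?_⟩
  rcases ht.eq_or_lt with rfl | ht
  · obtain ⟨p, hp⟩ := hnt.nonempty
    exact ⟨p, hp, by rw [h.eq_zero_of_isBounded hb ⟨p, hp⟩, zero_smul]⟩
  · refine ⟨t⁻¹ • x, ⟨t⁻¹ • y, ?_⟩, (smul_inv_smul₀ ht.ne' x).symm⟩
    simpa [ht.ne'] using h.smul (inv_nonneg.2 ht.le)

end Normed

section FiniteDimensional

variable {E : Type} [AddCommGroup E] [Module ℝ E] [FiniteDimensional ℝ E]

abbrev point (p : E) : ExtFormulation E where
  Ineq := Unit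
  Aux := Unit
  Eqn := E
  ineq _ := LinearMap.coprod 0 (-LinearMap.id)
  eqn := (LinearMap.fst ℝ E Unit).coprod (LinearMap.toSpanSingleton ℝ E (-p))

theorem feasible_point_iff {p x : E} {y : (point p).Aux} {t : ℝ} :
    (point p).Feasible ((x, y), t) ↔ 0 ≤ t ∧ x = t • p := by
  simp [Feasible, add_neg_eq_zero]

theorem proj_point (p : E) : (point p).proj = {p} := by
  ext x
  simp [proj, Feasible, add_neg_eq_zero]

theorem homogenizationExact_point (p : E) : (point p).HomogenizationExact := by
  intro x y t h
  obtain ⟨ht, rfl⟩ := feasible_point_iff.1 h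
  exact ⟨ht, p, by simp [proj_point], rfl⟩

variable {κ : Type} [Fintype κ]

def blockProj (L : κ → ExtFormulation E) (i : κ) :
    (E × ((j : κ) → (E × (L j).Aux) × ℝ)) × ℝ →ₗ[ℝ] (E × (L i).Aux) × ℝ :=
  LinearMap.proj i ∘ₗ LinearMap.snd ℝ E _ ∘ₗ LinearMap.fst ℝ _ ℝ

abbrev balas (L : κ → ExtFormulation E) : ExtFormulation E where
  Ineq := Σ i, (L i).Ineq
  Aux := (i : κ) → (E × (L i).Aux) × ℝ
  Eqn := (E × ℝ) × ((i : κ) → (L i).Eqn)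
  ineq r := (L r.1).ineq r.2 ∘ₗ blockProj L r.1
  eqn := ((LinearMap.fst ℝ E _ ∘ₗ LinearMap.fst ℝ _ ℝ -
      ∑ i, LinearMap.fst ℝ E _ ∘ₗ LinearMap.fst ℝ _ ℝ ∘ₗ blockProj L i).prod
    (∑ i, LinearMap.snd ℝ _ ℝ ∘ₗ blockProj L i - LinearMap.snd ℝ _ ℝ)).prod
    (LinearMap.pi fun i => (L i).eqn ∘ₗ blockProj L i)

theorem feasible_balas_iff {L : κ → ExtFormulation E} {x : E} {v : (balas L).Aux} {t : ℝ} :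
    (balas L).Feasible ((x, v), t) ↔
      (∀ i, (L i).Feasible (v i)) ∧ x = ∑ i, (v i).1.1 ∧ ∑ i, (v i).2 = t := by
  simp [Feasible, balas, blockProj, Prod.ext_iff, funext_iff, sub_eq_zero, Sigma.forall, forall_and]
  tauto

theorem subset_proj_balas (L : κ → ExtFormulation E) (i : κ) : (L i).proj ⊆ (balas L).proj := by
  classical
  rintro x ⟨y, hx⟩
  refine ⟨Pi.single i ((x, y), 1), feasible_balas_iff.2 ⟨fun j => ?_, ?_, ?_⟩⟩
  · rcases eq_or_ne j i with rfl | hj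
    · simpa using hx
    · simpa [hj] using feasible_zero
  · rw [Finset.sum_eq_single i (fun j _ hj => by simp [hj]) (by simp)]
    simp
  · rw [Finset.sum_eq_single i (fun j _ hj => by simp [hj]) (by simp)]
    simp

theorem proj_balas {L : κ → ExtFormulation E} (hL : ∀ i, (L i).HomogenizationExact) :
    (balas L).proj = convexHull ℝ (⋃ i, (L i).proj) := by
  refine subset_antisymm ?_
    (convexHull_min (Set.iUnion_subset (subset_proj_balas L)) (convex_proj _))
  rintro x ⟨v, hxv⟩
  obtain ⟨hv, rfl, hsum⟩ := feasible_balas_iff.1 hxv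
  choose ht p hp hx using fun i => hL i _ _ _ (hv i)
  rw [Finset.sum_congr rfl fun i _ => hx i]
  exact (convex_convexHull ℝ _).sum_mem (fun i _ => ht i) hsum
    fun i _ => subset_convexHull ℝ _ (Set.mem_iUnion_of_mem i (hp i))

end FiniteDimensional

section Coordinates

variable {ι : Type} [Fintype ι]

theorem isExtFormulation (L : ExtFormulation (ι → ℝ)) :
    IsExtFormulation L.proj (Fintype.card L.Ineq) := by
  classical
  let eM := (Fintype.equivFin L.Ineq).symm
  let eF := (Module.finBasis ℝ L.Aux).equivFun
  let eG := (Module.finBasis ℝ L.Eqn).equivFun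
  let φ := LinearMap.pi fun r => L.ineq (eM r)
  let ψ := eG.toLinearMap ∘ₗ L.eqn
  let inX := LinearMap.inl ℝ _ ℝ ∘ₗ LinearMap.inl ℝ (ι → ℝ) L.Aux
  let inY := LinearMap.inl ℝ _ ℝ ∘ₗ LinearMap.inr ℝ (ι → ℝ) L.Aux ∘ₗ eF.symm.toLinearMap
  refine ⟨_, _, LinearMap.toMatrix' (φ ∘ₗ inX), LinearMap.toMatrix' (φ ∘ₗ inY), -φ ((0, 0), 1),
    LinearMap.toMatrix' (ψ ∘ₗ inX), LinearMap.toMatrix' (ψ ∘ₗ inY), -ψ ((0, 0), 1), ?_⟩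
  ext x
  simp only [LinearMap.toMatrix'_mulVec, proj, Feasible, Set.mem_ofPred_eq,
    eF.symm.surjective.exists]
  refine exists_congr fun y => and_congr ?_ ?_
  · rw [← eM.forall_congr_right]
    refine forall_congr' fun r => ?_
    rw [LinearMap.apply_prod_prod_eq_add (L.ineq (eM r))]
    simp only [smul_eq_mul, one_mul, LinearMap.coe_comp, LinearMap.coe_inl, Function.comp_apply,
      LinearMap.pi_apply, LinearMap.coe_inr, LinearEquiv.coe_coe, Pi.neg_apply, φ, inX, inY]
    constructor <;> intro <;> linarith
  · rw [← eG.map_eq_zero_iff]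
    change ψ _ = 0 ↔ _
    rw [LinearMap.apply_prod_prod_eq_add ψ, one_smul, ← eq_neg_iff_add_eq_zero, funext_iff]
    simp [inX, inY]

abbrev ofMatrices {m k p : ℕ} (A : Matrix (Fin m) ι ℝ) (B : Matrix (Fin m) (Fin k) ℝ)
    (b : Fin m → ℝ) (C : Matrix (Fin p) ι ℝ) (D : Matrix (Fin p) (Fin k) ℝ) (c : Fin p → ℝ) :
    ExtFormulation (ι → ℝ) where
  Ineq := Fin m
  Aux := Fin k → ℝ
  Eqn := Fin p → ℝ
  ineq r := LinearMap.proj r ∘ₗ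
    (A.mulVecLin.coprod B.mulVecLin).coprod (LinearMap.toSpanSingleton ℝ _ (-b))
  eqn := (C.mulVecLin.coprod D.mulVecLin).coprod (LinearMap.toSpanSingleton ℝ _ (-c))

end Coordinates

end ExtFormulation

section

variable {ι : Type} [Fintype ι]

theorem IsExtFormulation.exists_extFormulation {P : Set (ι → ℝ)} {m : ℕ}
    (h : IsExtFormulation P m) :
    ∃ L : ExtFormulation (ι → ℝ), L.proj = P ∧ Fintype.card L.Ineq = m := by
  obtain ⟨k, p, A, B, b, C, D, c, rfl⟩ := h
  refine ⟨.ofMatrices A B b C D c, ?_, Fintype.card_fin m⟩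
  ext x
  simp [ExtFormulation.proj, ExtFormulation.Feasible, funext_iff, add_neg_eq_zero]

theorem IsExtFormulation.isExtFormulation_xc {P : Set (ι → ℝ)} {m : ℕ}
    (h : IsExtFormulation P m) : IsExtFormulation P (xc P) :=
  Nat.sInf_mem (s := {m | IsExtFormulation P m}) ⟨m, h⟩

theorem isExtFormulation_convexHull (s : Finset (ι → ℝ)) :
    IsExtFormulation (convexHull ℝ (↑s : Set (ι → ℝ))) s.card := by
  have h := (ExtFormulation.balas fun v : s => ExtFormulation.point v.1).isExtFormulation
  rw [ExtFormulation.proj_balas fun v => ExtFormulation.homogenizationExact_point _,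
    Fintype.card_sigma] at h
  simpa [ExtFormulation.proj_point, Set.iUnion_singleton_eq_range] using h

theorem exists_extFormulation_homogenizationExact {s : Finset (ι → ℝ)} (hs : s.Nonempty) :
    ∃ L : ExtFormulation (ι → ℝ), L.proj = convexHull ℝ ↑s ∧ L.HomogenizationExact ∧
      Fintype.card L.Ineq ≤ max 1 (xc (convexHull ℝ (↑s : Set (ι → ℝ)))) := by
  rcases (hs.to_set.convexHull (𝕜 := ℝ)).exists_eq_singleton_or_nontrivial with ⟨p, hp⟩ | hnt
  · exact ⟨.point p, by rw [hp, ExtFormulation.proj_point],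
      ExtFormulation.homogenizationExact_point p, le_max_left _ _⟩
  · obtain ⟨L, hL, hcard⟩ :=
      (isExtFormulation_convexHull s).isExtFormulation_xc.exists_extFormulation
    refine ⟨L, hL, L.homogenizationExact_of_isBounded ?_ (hL ▸ hnt),
      hcard.trans_le (le_max_right _ _)⟩
    rw [hL, isBounded_convexHull]
    exact s.finite_toSet.isBounded

end

/-- **Balas' union of polytopes.** Let `P₁, …, P_k` be non-empty polytopes in `ℝ^d`
(i.e. convex hulls of non-empty finite point sets) and let `P = conv(P₁ ∪ ⋯ ∪ P_k)`.
Then `xc(P) ≤ ∑_{i=1}^k max{1, xc(P_i)}`. -/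
theorem xc_convexHull_iUnion_le {ι : Type} [Fintype ι] (k : ℕ) (P : Fin k → Set (ι → ℝ))
    (hP : ∀ i, ∃ s : Finset (ι → ℝ), s.Nonempty ∧ P i = convexHull ℝ (↑s : Set (ι → ℝ))) :
    xc (convexHull ℝ (⋃ i, P i)) ≤ ∑ i, max 1 (xc (P i)) := by
  have hL : ∀ i, ∃ L : ExtFormulation (ι → ℝ), L.proj = P i ∧ L.HomogenizationExact ∧
      Fintype.card L.Ineq ≤ max 1 (xc (P i)) := fun i => by
    obtain ⟨s, hs, hPs⟩ := hP i
    exact hPs ▸ exists_extFormulation_homogenizationExact hs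
  choose L hLP hLexact hLcard using hL
  have h := (ExtFormulation.balas L).isExtFormulation
  simp only [ExtFormulation.proj_balas hLexact, hLP, Fintype.card_sigma] at h
  exact (Nat.sInf_le h).trans (Finset.sum_le_sum fun i _ => hLcard i)
end

section
/- Let G = (V,E) be a finite connected simple graph and let X ⊆ V be a proper non-empty set of vertices. Then the non-empty subgraph polytope of G decomposes as NESUBP(G) = conv( NESUBP(G−X) ∪ ⋃_{v ∈ X} ( SUBP(G) ∩ {(x,y) ∈ R^V × R^E | x_v = 1} ) ), where NESUBP(G−X) is canonically embedded in R^V × R^E by setting all coordinates indexed by vertices in X and by edges incident to X equal to 0. -/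
/-!
A vertex point `(χ^S, χ^F)` of `NESUBP(G)` either has `S ∩ X = ∅`, and is then a vertex point of
`NESUBP(G − X)`, or has some `v ∈ S ∩ X`, and then lies in `SUBP(G) ∩ {x_v = 1}`. Conversely
`NESUBP(G − X) ⊆ NESUBP(G)`, and since `x_v ≤ 1` on `SUBP(G)`, the slice
`SUBP(G) ∩ {x_v = 1}` is a face: it is the convex hull of the vertex points with `v ∈ S`, all of
which are non-empty subgraphs.
-/

/-- The point `(χ^S, χ^F) ∈ ℝ^V × ℝ^E` (identified with `ℝ^(V ⊕ E)`). -/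
noncomputable def charVec {V : Type} (G : SimpleGraph V) (S : Set V) (F : Set (Sym2 V)) :
    V ⊕ ↥G.edgeSet → ℝ :=
  Sum.elim (S.indicator 1) (fun e => F.indicator 1 (e : Sym2 V))

/-- The subgraph polytope of `G`:
`conv{(χ^S, χ^F) | S ⊆ V, F ⊆ E(S)}`, where `E(S)` is the set of edges of `G`
with both endpoints in `S`. -/
noncomputable def subp {V : Type} (G : SimpleGraph V) : Set (V ⊕ ↥G.edgeSet → ℝ) :=
  convexHull ℝ {z | ∃ (S : Set V) (F : Set (Sym2 V)),
    F ⊆ G.edgeSet ∧ (∀ e ∈ F, ∀ w ∈ e, w ∈ S) ∧ z = charVec G S F}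

/-- The non-empty subgraph polytope of `G`:
`conv{(χ^S, χ^F) | ∅ ⊊ S ⊆ V, F ⊆ E(S)}`. -/
noncomputable def nesubp {V : Type} (G : SimpleGraph V) : Set (V ⊕ ↥G.edgeSet → ℝ) :=
  convexHull ℝ {z | ∃ (S : Set V) (F : Set (Sym2 V)), S.Nonempty ∧
    F ⊆ G.edgeSet ∧ (∀ e ∈ F, ∀ w ∈ e, w ∈ S) ∧ z = charVec G S F}

/-- The non-empty subgraph polytope of `G − X`, canonically embedded in
`ℝ^V × ℝ^E` by setting all coordinates indexed by vertices of `X` and by edges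
incident to `X` equal to `0`: it is the convex hull of the points `(χ^S, χ^F)`
with `∅ ⊊ S ⊆ V ∖ X` and `F ⊆ E(S)` (edges of `G` with both endpoints in `S`,
which are exactly the edges of `G − X` with both endpoints in `S`). -/
noncomputable def nesubpDel {V : Type} (G : SimpleGraph V) (X : Set V) :
    Set (V ⊕ ↥G.edgeSet → ℝ) :=
  convexHull ℝ {z | ∃ (S : Set V) (F : Set (Sym2 V)), S.Nonempty ∧ Disjoint S X ∧
    F ⊆ G.edgeSet ∧ (∀ e ∈ F, ∀ w ∈ e, w ∈ S) ∧ z = charVec G S F}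

theorem mem_convexHull_sep_eq_of_forall_le {𝕜 E : Type*} [Field 𝕜] [LinearOrder 𝕜]
    [IsStrictOrderedRing 𝕜] [AddCommGroup E] [Module 𝕜 E] {s : Set E} (l : E →ₗ[𝕜] 𝕜) {c : 𝕜}
    (hs : ∀ x ∈ s, l x ≤ c) {z : E} (hz : z ∈ convexHull 𝕜 s) (hlz : l z = c) :
    z ∈ convexHull 𝕜 {x ∈ s | l x = c} := by
  set T := {x ∈ s | l x = c}
  suffices hsK : convexHull 𝕜 s ⊆ {x | l x ≤ c ∧ (l x = c → x ∈ convexHull 𝕜 T)} from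
    (hsK hz).2 hlz
  refine convexHull_min (fun x hx => ⟨hs x hx, fun h => subset_convexHull 𝕜 T ⟨hx, h⟩⟩) ?_
  rintro x ⟨hxc, hxT⟩ y ⟨hyc, hyT⟩ a b ha hb hab
  have hl : l (a • x + b • y) = a * l x + b * l y := by simp
  have hcomb : a * c + b * c = c := by rw [← add_mul, hab, one_mul]
  have hax := mul_le_mul_of_nonneg_left hxc ha
  have hby := mul_le_mul_of_nonneg_left hyc hb
  refine ⟨by rw [hl]; linarith, fun hc => ?_⟩
  rcases ha.eq_or_lt with rfl | ha'
  · obtain rfl : b = 1 := by simpa using hab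
    simp_all
  rcases hb.eq_or_lt with rfl | hb'
  · obtain rfl : a = 1 := by simpa using hab
    simp_all
  have hx : l x = c := by
    by_contra hne
    linarith [mul_lt_mul_of_pos_left (hxc.lt_of_ne hne) ha']
  have hy : l y = c := by
    by_contra hne
    linarith [mul_lt_mul_of_pos_left (hyc.lt_of_ne hne) hb']
  exact convex_convexHull 𝕜 T (hxT hx) (hyT hy) ha hb hab

section

variable {V : Type} (G : SimpleGraph V)

@[simp]
theorem charVec_inl (S : Set V) (F : Set (Sym2 V)) (v : V) :
    charVec G S F (Sum.inl v) = S.indicator 1 v :=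
  rfl

theorem nesubpDel_subset_nesubp (X : Set V) : nesubpDel G X ⊆ nesubp G :=
  convexHull_mono fun _ ⟨S, F, hS, _, hF, hFS, hz⟩ => ⟨S, F, hS, hF, hFS, hz⟩

theorem subp_inter_coord_eq_one_subset_nesubp (v : V) :
    subp G ∩ {z | z (Sum.inl v) = 1} ⊆ nesubp G := by
  rintro z ⟨hz, hzv : z (Sum.inl v) = 1⟩
  refine convexHull_mono ?_ <|
    mem_convexHull_sep_eq_of_forall_le (LinearMap.proj (Sum.inl v)) ?_ hz hzv
  · rintro _ ⟨⟨S, F, hF, hFS, rfl⟩, hv⟩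
    have hvS : v ∈ S := by
      by_contra hvS
      simp [hvS] at hv
    exact ⟨S, F, ⟨v, hvS⟩, hF, hFS, rfl⟩
  · rintro _ ⟨S, F, -, -, rfl⟩
    exact Set.indicator_apply_le' (fun _ => le_rfl) (fun _ => zero_le_one)

end

theorem nesubp_eq_convexHull_union_general {V : Type}
    (G : SimpleGraph V) (X : Set V) :
    nesubp G = convexHull ℝ
      (nesubpDel G X ∪ ⋃ v ∈ X, (subp G ∩ {z | z (Sum.inl v) = 1})) := by
  refine subset_antisymm (convexHull_min ?_ (convex_convexHull ℝ _))
    (convexHull_min ?_ (convex_convexHull ℝ _))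
  · rintro _ ⟨S, F, hS, hF, hFS, rfl⟩
    apply subset_convexHull
    by_cases hSX : Disjoint S X
    · exact .inl (subset_convexHull ℝ _ ⟨S, F, hS, hSX, hF, hFS, rfl⟩)
    · obtain ⟨v, hvS, hvX⟩ := Set.not_disjoint_iff.mp hSX
      refine .inr (Set.mem_biUnion hvX ⟨subset_convexHull ℝ _ ⟨S, F, hF, hFS, rfl⟩, ?_⟩)
      simp [hvS]
  · exact Set.union_subset (nesubpDel_subset_nesubp G X)
      (Set.iUnion₂_subset fun v _ => subp_inter_coord_eq_one_subset_nesubp G v)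

/-- Let `G = (V, E)` be a finite connected simple graph and `X ⊆ V` a proper non-empty
set of vertices. Then the non-empty subgraph polytope of `G` decomposes as
`NESUBP(G) = conv( NESUBP(G−X) ∪ ⋃_{v ∈ X} (SUBP(G) ∩ {(x,y) | x_v = 1}) )`,
where `NESUBP(G−X)` is canonically embedded in `ℝ^V × ℝ^E`. -/
theorem nesubp_eq_convexHull_union {V : Type} [Fintype V] [DecidableEq V]
    (G : SimpleGraph V) (hG : G.Connected) (X : Set V)
    (hX : X.Nonempty) (hXV : X ≠ Set.univ) :
    nesubp G = convexHull ℝ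
      (nesubpDel G X ∪ ⋃ v ∈ X, (subp G ∩ {z | z (Sum.inl v) = 1})) :=
  nesubp_eq_convexHull_union_general G X
end

section
/- Let G = (V,E) be a finite connected simple graph and X ⊆ V a set of vertices. Then xc(NESUBP(G)) ≤ xc(NESUBP(G−X)) + |X|·(3|E| + |V| + 1), where if X = V the term xc(NESUBP(G−X)) is taken to be 0. In particular, xc(NESUBP(G)) ≤ xc(NESUBP(G−X)) + O(|X|·|E|). -/
/-!
`NESUBP(G)` is the convex hull of the union of the faces `P_v = conv{(χ^S, χ^F) | v ∈ S}`,
`v ∈ X`, and of `NESUBP(G − X)`. Each face is cut out by `0 ≤ x_e ≤ x_u` for `u ∈ e`,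
`x_w ≤ 1` for `w ≠ v`, and `x_v = 1`: integrality holds because a feasible `x` is the average
`∫₀¹ 1[x ≥ t] dt` of characteristic vectors of subgraphs containing `v`, and `x_w ≥ 0` is implied
since, `G` being connected, every `w ≠ v` lies on an edge. That is `3|E| + |V| - 1` inequalities.

Balas' formulation of the convex hull of a union of nonempty polytopes `P_i` writes
`x = ∑ x_i`, `∑ λ_i = 1`, `λ_i ≥ 0`, and `x_i ∈ λ_i P_i` through the formulation of `P_i` with
its right-hand side scaled by `λ_i`; boundedness of `P_i` forces `x_i = 0` when `λ_i = 0`.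
It costs one inequality per piece on top of the pieces' own, so
`|X|·(3|E| + |V|) + xc(NESUBP(G − X)) + 1` in total, which is within the bound unless `X = ∅`,
where there is nothing to prove.
-/

open Set

theorem LinearMap.comp_inl_add_comp_inr {R M N K : Type*} [Semiring R] [AddCommMonoid M]
    [AddCommMonoid N] [AddCommMonoid K] [Module R M] [Module R N] [Module R K]
    (f : M × N →ₗ[R] K) (x : M) (y : N) :
    f.comp (LinearMap.inl R M N) x + f.comp (LinearMap.inr R M N) y = f (x, y) :=
  LinearMap.congr_fun f.coprod_comp_inl_inr (x, y)

section ExtendedFormulation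

variable {ι : Type} [Fintype ι]

theorem IsExtFormulation.of_linearMap {R Q W : Type} [Fintype R] [Fintype Q]
    [AddCommGroup W] [Module ℝ W] [FiniteDimensional ℝ W] {P : Set (ι → ℝ)}
    (F : (ι → ℝ) × W →ₗ[ℝ]  R → ℝ) (b : R → ℝ) (H : (ι → ℝ) × W →ₗ[ℝ]  Q → ℝ) (c : Q → ℝ)
    (hP : P = {x | ∃ y, F (x, y) ≤ b ∧ H (x, y) = c}) :
    IsExtFormulation P (Fintype.card R) := by
  classical
  let eW := (Module.finBasis ℝ W).equivFun.symm
  let eR := (Fintype.equivFin R).symm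
  let eQ := (Fintype.equivFin Q).symm
  let F' := (LinearMap.funLeft ℝ ℝ eR) ∘ₗ F ∘ₗ (LinearMap.prodMap LinearMap.id eW.toLinearMap)
  let H' := (LinearMap.funLeft ℝ ℝ eQ) ∘ₗ H ∘ₗ (LinearMap.prodMap LinearMap.id eW.toLinearMap)
  refine ⟨_, _, LinearMap.toMatrix' (F' ∘ₗ LinearMap.inl ℝ _ _),
    LinearMap.toMatrix' (F' ∘ₗ LinearMap.inr ℝ _ _), b ∘ eR,
    LinearMap.toMatrix' (H' ∘ₗ LinearMap.inl ℝ _ _),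
    LinearMap.toMatrix' (H' ∘ₗ LinearMap.inr ℝ _ _), c ∘ eQ, ?_⟩
  simp only [LinearMap.toMatrix'_mulVec, ← Pi.add_apply, LinearMap.comp_inl_add_comp_inr, hP]
  ext x
  refine ⟨fun ⟨y, hF, hH⟩ => ⟨eW.symm y, fun i => ?_, fun j => ?_⟩,
    fun ⟨y, hF, hH⟩ => ⟨eW y, fun r => ?_, funext fun q => ?_⟩⟩
  · simpa [F'] using hF (eR i)
  · simpa [H'] using congrFun hH (eQ j)
  · simpa [F'] using hF (eR.symm r)
  · simpa [H'] using hH (eQ.symm q)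

theorem IsExtFormulation.exists_linearMap {P : Set (ι → ℝ)} {m : ℕ} (h : IsExtFormulation P m) :
    ∃ (k p : ℕ) (F : (ι → ℝ) × (Fin k → ℝ) →ₗ[ℝ] Fin m → ℝ) (b : Fin m → ℝ)
      (H : (ι → ℝ) × (Fin k → ℝ) →ₗ[ℝ] Fin p → ℝ) (c : Fin p → ℝ),
      P = {x | ∃ y, F (x, y) ≤ b ∧ H (x, y) = c} := by
  obtain ⟨k, p, A, B, b, C, D, c, rfl⟩ := h
  refine ⟨k, p, A.mulVecLin.coprod B.mulVecLin, b, C.mulVecLin.coprod D.mulVecLin, c, ?_⟩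
  simp [Pi.le_def, funext_iff]

theorem IsExtFormulation.xc_le {P : Set (ι → ℝ)} {m : ℕ} (h : IsExtFormulation P m) :
    xc P ≤ m :=
  Nat.sInf_le h

theorem IsExtFormulation.xc_of_exists {P : Set (ι → ℝ)} (h : ∃ m, IsExtFormulation P m) :
    IsExtFormulation P (xc P) :=
  Nat.sInf_mem h

end ExtendedFormulation

section Polyhedra

variable {E W R Q : Type*} [AddCommGroup W] [Module ℝ W]

theorem convex_setOf_exists_le_eq [AddCommGroup E] [Module ℝ E] (F : E × W →ₗ[ℝ] R → ℝ)
    (b : R → ℝ) (H : E × W →ₗ[ℝ] Q → ℝ) (c : Q → ℝ) :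
    Convex ℝ {x | ∃ y, F (x, y) ≤ b ∧ H (x, y) = c} := by
  have hpoly : Convex ℝ {z | F z ≤ b ∧ H z = c} :=
    ((convex_Iic b).linear_preimage F).inter ((convex_singleton c).linear_preimage H)
  convert hpoly.linear_image (LinearMap.fst ℝ E W)
  ext x
  simp

variable [NormedAddCommGroup E] [NormedSpace ℝ E] {F : E × W →ₗ[ℝ] R → ℝ} {b : R → ℝ}
  {H : E × W →ₗ[ℝ] Q → ℝ} {c : Q → ℝ} {P : Set E}

theorem eq_zero_of_recession_of_isBounded (hP : P = {x | ∃ y, F (x, y) ≤ b ∧ H (x, y) = c})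
    (hne : P.Nonempty) (hbdd : Bornology.IsBounded P) {x : E} {y : W}
    (hF : F (x, y) ≤ 0) (hH : H (x, y) = 0) : x = 0 := by
  obtain ⟨p₀, hp₀⟩ := hne
  obtain ⟨y₀, hF₀, hH₀⟩ : ∃ y₀, F (p₀, y₀) ≤ b ∧ H (p₀, y₀) = c := by rwa [hP] at hp₀
  have hray : ∀ s : ℝ, 0 ≤ s → p₀ + s • x ∈ P := fun s hs => by
    have hz : (p₀ + s • x, y₀ + s • y) = (p₀, y₀) + s • (x, y) := rfl
    rw [hP]
    refine ⟨y₀ + s • y, ?_, ?_⟩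
    · rw [hz, map_add, map_smul]
      exact add_le_of_le_of_nonpos hF₀ (smul_nonpos_of_nonneg_of_nonpos hs hF)
    · rw [hz, map_add, map_smul, hH, hH₀, smul_zero, add_zero]
  obtain ⟨C, hC⟩ := hbdd.exists_norm_le
  by_contra hx
  have hxpos : 0 < ‖x‖ := norm_pos_iff.2 hx
  set s := (2 * C + 1) / ‖x‖
  have hs : 0 ≤ s := div_nonneg (by linarith [norm_nonneg p₀, hC p₀ hp₀]) hxpos.le
  have hsx : ‖s • x‖ = 2 * C + 1 := by
    rw [norm_smul, Real.norm_of_nonneg hs, div_mul_cancel₀ _ hxpos.ne']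
  have := norm_sub_le (p₀ + s • x) p₀
  rw [add_sub_cancel_left, hsx] at this
  linarith [hC _ (hray s hs), hC p₀ hp₀]

theorem exists_le_smul_and_eq_smul_iff (hP : P = {x | ∃ y, F (x, y) ≤ b ∧ H (x, y) = c})
    (hne : P.Nonempty) (hbdd : Bornology.IsBounded P) (x : E) {t : ℝ} (ht : 0 ≤ t) :
    (∃ y, F (x, y) ≤ t • b ∧ H (x, y) = t • c) ↔ ∃ p ∈ P, x = t • p := by
  constructor
  · rintro ⟨y, hF, hH⟩
    rcases ht.eq_or_lt with rfl | ht
    · rw [zero_smul] at hF hH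
      exact ⟨hne.some, hne.some_mem, by
        rw [zero_smul, eq_zero_of_recession_of_isBounded hP hne hbdd hF hH]⟩
    · refine ⟨t⁻¹ • x, hP ▸ ⟨t⁻¹ • y, ?_, ?_⟩, (smul_inv_smul₀ ht.ne' x).symm⟩
      · rw [← Prod.smul_mk, map_smul, ← inv_smul_smul₀ ht.ne' b]
        exact smul_le_smul_of_nonneg_left hF (inv_nonneg.2 ht.le)
      · rw [← Prod.smul_mk, map_smul, hH, inv_smul_smul₀ ht.ne']
  · rintro ⟨p, hp, rfl⟩
    obtain ⟨y, hF, hH⟩ : ∃ y, F (p, y) ≤ b ∧ H (p, y) = c := by rwa [hP] at hp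
    refine ⟨t • y, ?_, ?_⟩
    · rw [← Prod.smul_mk, map_smul]
      exact smul_le_smul_of_nonneg_left hF ht
    · rw [← Prod.smul_mk, map_smul, hH]

end Polyhedra

section ConvexCombinations

variable {E I : Type*} [Fintype I]

def convexCombinations [AddCommGroup E] [Module ℝ E] (P : I → Set E) : Set E :=
  {x | ∃ (l : I → ℝ) (q : I → E), (∀ i, 0 ≤ l i) ∧ ∑ i, l i = 1 ∧ (∀ i, q i ∈ P i) ∧
    x = ∑ i, l i • q i}

theorem convexHull_iUnion_eq_convexCombinations [AddCommGroup E] [Module ℝ E] {P : I → Set E}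
    (hne : ∀ i, (P i).Nonempty) (hconv : Convex ℝ (convexCombinations P)) :
    convexHull ℝ (⋃ i, P i) = convexCombinations P := by
  classical
  refine Subset.antisymm (convexHull_min ?_ hconv) ?_
  · refine iUnion_subset fun j x hx => ⟨Pi.single j 1,
      Function.update (fun i => (hne i).some) j x, fun i => ?_, by simp, fun i => ?_, ?_⟩
    · rw [Pi.single_apply]
      split_ifs <;> norm_num
    · rcases eq_or_ne i j with rfl | hij
      · simpa using hx
      · simpa [hij] using (hne i).some_mem
    · simp [Pi.single_apply, ite_smul]
  · rintro x ⟨l, q, hl, hl1, hq, rfl⟩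
    exact (convex_convexHull ℝ _).sum_mem (fun i _ => hl i) hl1
      fun i _ => subset_convexHull ℝ _ (mem_iUnion.2 ⟨i, hq i⟩)

theorem convexCombinations_eq_setOf_homogenized [NormedAddCommGroup E] [NormedSpace ℝ E]
    {W : I → Type*} [∀ i, AddCommGroup (W i)] [∀ i, Module ℝ (W i)] {R Q : I → Type*}
    {F : ∀ i, E × W i →ₗ[ℝ] R i → ℝ} {b : ∀ i, R i → ℝ}
    {H : ∀ i, E × W i →ₗ[ℝ] Q i → ℝ} {c : ∀ i, Q i → ℝ} {P : I → Set E}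
    (hP : ∀ i, P i = {x | ∃ y, F i (x, y) ≤ b i ∧ H i (x, y) = c i})
    (hne : ∀ i, (P i).Nonempty) (hbdd : ∀ i, Bornology.IsBounded (P i)) :
    convexCombinations P = {x | ∃ (xs : I → E) (ys : ∀ i, W i) (l : I → ℝ),
      (∀ i, (F i (xs i, ys i) ≤ l i • b i ∧ H i (xs i, ys i) = l i • c i) ∧ 0 ≤ l i) ∧
      x = ∑ i, xs i ∧ ∑ i, l i = 1} := by
  ext x
  constructor
  · rintro ⟨l, q, hl, hl1, hq, rfl⟩
    choose ys hys using fun i => (exists_le_smul_and_eq_smul_iff (hP i) (hne i) (hbdd i)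
      (l i • q i) (hl i)).2 ⟨q i, hq i, rfl⟩
    exact ⟨fun i => l i • q i, ys, l, fun i => ⟨hys i, hl i⟩, rfl, hl1⟩
  · rintro ⟨xs, ys, l, hi, rfl, hl1⟩
    choose q hq hxq using fun i => (exists_le_smul_and_eq_smul_iff (hP i) (hne i) (hbdd i)
      (xs i) (hi i).2).1 ⟨ys i, (hi i).1⟩
    exact ⟨l, q, fun i => (hi i).2, hl1, hq, Finset.sum_congr rfl fun i _ => hxq i⟩

end ConvexCombinations

section Balas

variable {ι I : Type} [Fintype ι] [Fintype I]

theorem IsExtFormulation.convexHull_iUnion {P : I → Set (ι → ℝ)} {m : I → ℕ}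
    (hP : ∀ i, IsExtFormulation (P i) (m i)) (hne : ∀ i, (P i).Nonempty)
    (hbdd : ∀ i, Bornology.IsBounded (P i)) :
    IsExtFormulation (convexHull ℝ (⋃ i, P i)) (∑ i, (m i + 1)) := by
  classical
  choose k p F b H c hPF using fun i => (hP i).exists_linearMap
  let piece (i : I) : (ι → ℝ) × (I → ι → ℝ) × ((i : I) → Fin (k i) → ℝ) × (I → ℝ) →ₗ[ℝ]
      (ι → ℝ) × (Fin (k i) → ℝ) :=
    { toFun := fun z => (z.2.1 i, z.2.2.1 i), map_add' := fun _ _ => rfl,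
      map_smul' := fun _ _ => rfl }
  let weight (i : I) : (ι → ℝ) × (I → ι → ℝ) × ((i : I) → Fin (k i) → ℝ) × (I → ℝ) →ₗ[ℝ] ℝ :=
    { toFun := fun z => z.2.2.2 i, map_add' := fun _ _ => rfl, map_smul' := fun _ _ => rfl }
  let total : (ι → ℝ) × (I → ι → ℝ) × ((i : I) → Fin (k i) → ℝ) × (I → ℝ) →ₗ[ℝ] ι → ℝ :=
    { toFun := fun z => z.1 - ∑ i, z.2.1 i
      map_add' := fun z z' => by
        simp only [Prod.fst_add, Prod.snd_add, Pi.add_apply, Finset.sum_add_distrib]; abel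
      map_smul' := fun t z => by simp [Finset.smul_sum, smul_sub] }
  let Fb : (ι → ℝ) × (I → ι → ℝ) × ((i : I) → Fin (k i) → ℝ) × (I → ℝ) →ₗ[ℝ]
      (Σ i, Fin (m i)) ⊕ I → ℝ := LinearMap.pi <| Sum.elim
    (fun r => LinearMap.proj r.2 ∘ₗ F r.1 ∘ₗ piece r.1 - (weight r.1).smulRight (b r.1 r.2))
    (fun i => -weight i)
  let Hb : (ι → ℝ) × (I → ι → ℝ) × ((i : I) → Fin (k i) → ℝ) × (I → ℝ) →ₗ[ℝ]
      (Σ i, Fin (p i)) ⊕ ι ⊕ Unit → ℝ := LinearMap.pi <| Sum.elim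
    (fun q => LinearMap.proj q.2 ∘ₗ H q.1 ∘ₗ piece q.1 - (weight q.1).smulRight (c q.1 q.2))
    (Sum.elim (fun j => LinearMap.proj j ∘ₗ total) (fun _ => ∑ i, weight i))
  let cb : (Σ i, Fin (p i)) ⊕ ι ⊕ Unit → ℝ := Sum.elim 0 (Sum.elim 0 1)
  have hsys : convexCombinations P = {x | ∃ y, Fb (x, y) ≤ 0 ∧ Hb (x, y) = cb} := by
    rw [convexCombinations_eq_setOf_homogenized hPF hne hbdd]
    ext x
    simp [Fb, Hb, cb, piece, weight, total, Pi.le_def, funext_iff, sub_eq_zero, Sigma.forall,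
      forall_and]
    tauto
  rw [convexHull_iUnion_eq_convexCombinations hne (hsys ▸ convex_setOf_exists_le_eq _ _ _ _), hsys]
  convert IsExtFormulation.of_linearMap Fb 0 Hb _ rfl using 1
  simp [Finset.sum_add_distrib]

theorem isExtFormulation_singleton (x₀ : ι → ℝ) : IsExtFormulation {x₀} 0 := by
  simpa using IsExtFormulation.of_linearMap (P := {x₀}) (R := Fin 0) (W := Fin 0 → ℝ) 0 0
    (LinearMap.fst ℝ _ _) x₀ (by ext; simp)

theorem xc_empty : xc (∅ : Set (ι → ℝ)) = 0 := by
  simpa using (IsExtFormulation.of_linearMap (P := ∅) (R := Fin 0) (Q := Unit) (W := Fin 0 → ℝ)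
    0 0 0 1 (by ext; simp)).xc_le

theorem Set.Finite.exists_isExtFormulation_convexHull {S : Set (ι → ℝ)} (hS : S.Finite) :
    ∃ m, IsExtFormulation (convexHull ℝ S) m := by
  have := hS.fintype
  have h := IsExtFormulation.convexHull_iUnion (P := fun s : S => {(s : ι → ℝ)})
    (fun _ => isExtFormulation_singleton _) (fun _ => singleton_nonempty _)
    (fun _ => Bornology.isBounded_singleton)
  rw [iUnion_of_singleton_coe] at h
  exact ⟨_, h⟩

theorem xc_convexHull_iUnion_le_s4 {S : I → Set (ι → ℝ)} (hS : ∀ i, (S i).Finite) :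
    xc (convexHull ℝ (⋃ i, S i)) ≤ ∑ i, (xc (convexHull ℝ (S i)) + 1) := by
  classical
  -- Balas' construction needs nonempty pieces: an empty one could contribute spurious rays.
  have hJ : convexHull ℝ (⋃ j : {i // (S i).Nonempty}, convexHull ℝ (S j)) =
      convexHull ℝ (⋃ i, S i) := by
    refine Subset.antisymm (convexHull_min (iUnion_subset fun j =>
      convexHull_mono (subset_iUnion S j)) (convex_convexHull ℝ _)) (convexHull_mono ?_)
    exact iUnion_subset fun i x hx => mem_iUnion.2 ⟨⟨i, x, hx⟩, subset_convexHull ℝ _ hx⟩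
  have hEF := IsExtFormulation.convexHull_iUnion
    (P := fun j : {i // (S i).Nonempty} => convexHull ℝ (S j))
    (fun j => .xc_of_exists (hS j).exists_isExtFormulation_convexHull)
    (fun j => j.2.convexHull) (fun j => isBounded_convexHull.2 (hS j).isBounded)
  rw [hJ] at hEF
  calc xc (convexHull ℝ (⋃ i, S i))
      ≤ ∑ j : {i // (S i).Nonempty}, (xc (convexHull ℝ (S j)) + 1) := hEF.xc_le
    _ = ∑ i ∈ Finset.univ.filter (fun i => (S i).Nonempty), (xc (convexHull ℝ (S i)) + 1) :=
      (Finset.sum_subtype _ (fun _ => Finset.mem_filter_univ _)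
        fun i => xc (convexHull ℝ (S i)) + 1).symm
    _ ≤ ∑ i, (xc (convexHull ℝ (S i)) + 1) :=
      Finset.sum_le_univ_sum_of_nonneg fun _ => Nat.zero_le _

end Balas

open MeasureTheory in
theorem mem_convexHull_indicator_superlevel {ι : Type*} [Finite ι] {z : ι → ℝ}
    (h0 : ∀ i, 0 ≤ z i) (h1 : ∀ i, z i ≤ 1) :
    z ∈ convexHull ℝ ((fun t => {i | t ≤ z i}.indicator 1) '' Ioc (0 : ℝ) 1) := by
  have := Fintype.ofFinite ι
  set g : ℝ → ι → ℝ := fun t => {i | t ≤ z i}.indicator 1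
  let μ := volume.restrict (Ioc (0 : ℝ) 1)
  have : IsProbabilityMeasure μ := ⟨by simp [μ]⟩
  have hg : ∀ i, (g · i) = (Iic (z i)).indicator 1 := fun i => by
    ext t
    simp [g, indicator_apply]
  have hgi : ∀ i, Integrable (g · i) μ := fun i => by
    rw [hg]
    exact (integrable_const 1).indicator measurableSet_Iic
  have hz : ∫ t, g t ∂μ = z := by
    ext i
    rw [eval_integral hgi, hg, integral_indicator_one measurableSet_Iic,
      measureReal_restrict_apply measurableSet_Iic, Iic_inter_Ioc_of_le (h1 i),
      Real.volume_real_Ioc_of_le (h0 i), sub_zero]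
  rw [← hz]
  refine Convex.integral_mem (convex_convexHull ℝ _) ?_ ?_ (Integrable.of_eval hgi)
  · refine (Set.Finite.isCompact_convexHull ℝ ?_).isClosed
    exact (finite_range fun s : Set ι => s.indicator (1 : ι → ℝ)).subset
      (image_subset_iff.2 fun t _ => mem_range_self _)
  · exact (ae_restrict_mem measurableSet_Ioc).mono fun t ht =>
      subset_convexHull ℝ _ (mem_image_of_mem g ht)

theorem SimpleGraph.Preconnected.exists_adj_of_ne {V : Type*} {G : SimpleGraph V}
    (hG : G.Preconnected) {v w : V} (hwv : w ≠ v) : ∃ u, G.Adj w u :=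
  have : Nontrivial V := nontrivial_of_ne w v hwv
  G.exists_adj_iff_not_isIsolated.2 (hG.not_isIsolated w)

section Subgraphs

variable {V : Type} (G : SimpleGraph V)

def subgraphVecs (p : Set V → Prop) : Set (V ⊕ G.edgeSet → ℝ) :=
  {z | ∃ (S : Set V) (F : Set (Sym2 V)), p S ∧ F ⊆ G.edgeSet ∧ (∀ e ∈ F, ∀ w ∈ e, w ∈ S) ∧
    z = charVec G S F}

theorem nesubp_eq_convexHull_subgraphVecs :
    nesubp G = convexHull ℝ (subgraphVecs G Set.Nonempty) :=
  rfl

theorem nesubpDel_eq_convexHull_subgraphVecs (X : Set V) :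
    nesubpDel G X = convexHull ℝ (subgraphVecs G fun S => S.Nonempty ∧ Disjoint S X) := by
  simp only [nesubpDel, subgraphVecs, and_assoc]

theorem iUnion_subgraphVecs {I : Type*} (p : I → Set V → Prop) :
    ⋃ i, subgraphVecs G (p i) = subgraphVecs G fun S => ∃ i, p i S := by
  ext z
  simp only [subgraphVecs, mem_iUnion, mem_ofPred_eq]
  grind

theorem nesubpDel_empty : nesubpDel G ∅ = nesubp G := by
  simp [nesubpDel_eq_convexHull_subgraphVecs, nesubp_eq_convexHull_subgraphVecs]

theorem nesubpDel_univ : nesubpDel G univ = ∅ := by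
  rw [nesubpDel_eq_convexHull_subgraphVecs, convexHull_eq_empty]
  exact eq_empty_of_forall_notMem fun _ ⟨S, _, ⟨hS, hSV⟩, _⟩ => hS.ne_empty (disjoint_univ.1 hSV)

theorem nesubp_eq_convexHull_iUnion (X : Set V) :
    nesubp G = convexHull ℝ (⋃ i : X ⊕ Unit, subgraphVecs G
      (Sum.elim (fun v S => ↑v ∈ S) (fun _ S => S.Nonempty ∧ Disjoint S X) i)) := by
  rw [iUnion_subgraphVecs, nesubp_eq_convexHull_subgraphVecs]
  congr! 3 with S
  refine ⟨fun hS => ?_, ?_⟩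
  · by_cases hSX : Disjoint S X
    · exact ⟨.inr (), hS, hSX⟩
    · obtain ⟨v, hvS, hvX⟩ := not_disjoint_iff.1 hSX
      exact ⟨.inl ⟨v, hvX⟩, hvS⟩
  · rintro ⟨v | _, h⟩
    exacts [⟨v, h⟩, h.1]

theorem subgraphVecs_finite [Finite V] (p : Set V → Prop) : (subgraphVecs G p).Finite :=
  (finite_range fun SF : Set V × Set (Sym2 V) => charVec G SF.1 SF.2).subset
    fun _ ⟨S, F, _, _, _, h⟩ => ⟨(S, F), h.symm⟩

theorem convexHull_subgraphVecs_mem_eq [Finite V] (v : V) (hv : ∀ w ≠ v, ∃ u, G.Adj w u) :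
    convexHull ℝ (subgraphVecs G (v ∈ ·)) = {x | (∀ e : G.edgeSet, 0 ≤ x (.inr e)) ∧
      (∀ d : G.Dart, x (.inr ⟨d.edge, d.edge_mem⟩) ≤ x (.inl d.fst)) ∧
      (∀ w ≠ v, x (.inl w) ≤ 1) ∧ x (.inl v) = 1} := by
  classical
  refine Subset.antisymm (convexHull_min ?_ ?_) ?_
  · rintro _ ⟨S, F, hvS, -, hFS, rfl⟩
    refine ⟨fun e => ?_, fun d => ?_, fun w _ => ?_, ?_⟩ <;>
      simp only [charVec, Sum.elim_inl, Sum.elim_inr, indicator_apply, Pi.one_apply]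
    · split_ifs <;> norm_num
    · split_ifs with hd hfst <;> norm_num
      exact hfst (hFS _ hd _ (Sym2.mem_mk_left _ _))
    · split_ifs <;> norm_num
    · rw [if_pos hvS]
  · rintro x ⟨hx0, hxd, hx1, hxv⟩ y ⟨hy0, hyd, hy1, hyv⟩ a b ha hb hab
    simp only [mem_ofPred_eq, Pi.add_apply, Pi.smul_apply, smul_eq_mul]
    refine ⟨fun e => add_nonneg (mul_nonneg ha (hx0 e)) (mul_nonneg hb (hy0 e)),
      fun d => by nlinarith [hxd d, hyd d], fun w hw => by nlinarith [hx1 w hw, hy1 w hw],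
      by rw [hxv, hyv]; linarith⟩
  · rintro x ⟨hx0, hxd, hx1, hxv⟩
    have hxe : ∀ e : G.edgeSet, ∀ w ∈ (e : Sym2 V), x (.inr e) ≤ x (.inl w) := by
      rintro ⟨e, he⟩ w hw
      obtain ⟨u, rfl⟩ := Sym2.mem_iff_exists.1 hw
      exact hxd ⟨(w, u), he⟩
    have hV0 : ∀ w, 0 ≤ x (.inl w) := fun w => by
      rcases eq_or_ne w v with rfl | hw
      · rw [hxv]; exact zero_le_one
      · obtain ⟨u, hu⟩ := hv w hw
        exact (hx0 ⟨s(w, u), hu⟩).trans (hxe _ w (Sym2.mem_mk_left w u))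
    have hV1 : ∀ w, x (.inl w) ≤ 1 := fun w => by
      rcases eq_or_ne w v with rfl | hw
      · exact hxv.le
      · exact hx1 w hw
    refine convexHull_mono ?_ (mem_convexHull_indicator_superlevel
      (Sum.forall.2 ⟨hV0, hx0⟩)
      (Sum.forall.2 ⟨hV1, fun e => (hxe e _ (Sym2.out_fst_mem _)).trans (hV1 _)⟩))
    rintro _ ⟨t, ⟨-, ht1⟩, rfl⟩
    refine ⟨{w | t ≤ x (.inl w)}, {e | ∃ h : e ∈ G.edgeSet, t ≤ x (.inr ⟨e, h⟩)},
      ht1.trans hxv.ge, fun e ⟨h, _⟩ => h, fun e ⟨h, he⟩ w hw => he.trans (hxe ⟨e, h⟩ w hw), ?_⟩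
    ext (w | e) <;> simp [charVec, indicator_apply]

theorem xc_convexHull_subgraphVecs_mem_le [Fintype V] [DecidableEq V] [DecidableRel G.Adj]
    (v : V) (hv : ∀ w ≠ v, ∃ u, G.Adj w u) :
    xc (convexHull ℝ (subgraphVecs G (v ∈ ·))) ≤ 3 * G.edgeFinset.card + (Fintype.card V - 1) := by
  let ineqs : (V ⊕ G.edgeSet → ℝ) →ₗ[ℝ] G.edgeSet ⊕ G.Dart ⊕ {w // w ≠ v} → ℝ :=
    LinearMap.pi <| Sum.elim (fun e => -LinearMap.proj (.inr e)) <| Sum.elim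
      (fun d => LinearMap.proj (.inr ⟨d.edge, d.edge_mem⟩) - LinearMap.proj (.inl d.fst))
      (fun w => LinearMap.proj (.inl w))
  have hEF := IsExtFormulation.of_linearMap (W := Fin 0 → ℝ) (ineqs ∘ₗ LinearMap.fst ℝ _ _)
    (Sum.elim 0 (Sum.elim 0 1)) (LinearMap.pi (fun _ : Unit => LinearMap.proj (.inl v)) ∘ₗ
      LinearMap.fst ℝ _ _) 1 ((convexHull_subgraphVecs_mem_eq G v hv).trans ?_)
  · refine hEF.xc_le.trans (le_of_eq ?_)
    rw [Fintype.card_sum, Fintype.card_sum, G.dart_card_eq_twice_card_edges,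
      ← SimpleGraph.edgeFinset_card, Fintype.card_subtype_compl, Fintype.card_subtype_eq]
    ring
  · ext x
    simp [ineqs, Pi.le_def, funext_iff, and_assoc]

end Subgraphs

/-- Let `G = (V, E)` be a finite connected simple graph and `X ⊆ V` a set of vertices.
Then `xc(NESUBP(G)) ≤ xc(NESUBP(G−X)) + |X|·(3|E| + |V| + 1)`, where if `X = V`
the term `xc(NESUBP(G−X))` is taken to be `0`. (In particular,
`xc(NESUBP(G)) ≤ xc(NESUBP(G−X)) + O(|X|·|E|)`.) -/
theorem xc_nesubp_le_xc_nesubpDel_add {V : Type} [Fintype V] [DecidableEq V]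
    (G : SimpleGraph V) [DecidableRel G.Adj] (hG : G.Connected) (X : Finset V) :
    xc (nesubp G) ≤
      (if X = Finset.univ then 0 else xc (nesubpDel G (↑X : Set V))) +
        X.card * (3 * G.edgeFinset.card + Fintype.card V + 1) := by
  have : Nonempty V := hG.nonempty
  rcases X.eq_empty_or_nonempty with rfl | hX
  · simp [Finset.univ_nonempty.ne_empty.symm, nesubpDel_empty]
  have hdel : xc (nesubpDel G X) ≤ if X = Finset.univ then 0 else xc (nesubpDel G X) := by
    split_ifs with h
    · simp [h, nesubpDel_univ, xc_empty]
    · exact le_rfl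
  calc xc (nesubp G)
      ≤ ∑ v : X, (xc (convexHull ℝ (subgraphVecs G (↑v ∈ ·))) + 1) + (xc (nesubpDel G X) + 1) := by
        rw [nesubp_eq_convexHull_iUnion G X]
        refine (xc_convexHull_iUnion_le_s4 fun i => subgraphVecs_finite G _).trans_eq ?_
        simp [Fintype.sum_sum_type, nesubpDel_eq_convexHull_subgraphVecs]
    _ ≤ ∑ v : X, (3 * G.edgeFinset.card + (Fintype.card V - 1) + 1) + (xc (nesubpDel G X) + 1) := by
        gcongr with v
        exact xc_convexHull_subgraphVecs_mem_le G v fun w => hG.preconnected.exists_adj_of_ne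
    _ ≤ _ := by
        rw [Finset.sum_const, Finset.card_univ, Fintype.card_coe, smul_eq_mul, add_assoc (3 * _),
          Nat.sub_add_cancel Fintype.card_pos]
        nlinarith [hX.card_pos]
end
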